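/- For every k ≥ 1 and every g > 4k: Σ_{i=1}^{g} p_k^S(i−1, g−i) = Σ_{i=1}^{4k} p_k^S(i−1, 4k−i). -/

import Mathlib

open MeasureTheory ENNReal
open scoped Classical

/-- A configuration: a coloring of `ℤ` with the two colors coded by `Bool`. -/
abbrev Config := ℤ → Bool

/-- A site `x` is unstable in `η` iff it lies in a monochromatic chain of length (at least) 3,
i.e. there is `y ∈ {x-2, x-1, x}` with `η y = η (y+1) = η (y+2)`. Spelled out explicitly. -/
def Unstable (η : Config) (x : ℤ) : Prop :=
  (η (x - 2) = η (x - 1) ∧ η (x - 1) = η x) ∨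
  (η (x - 1) = η x ∧ η x = η (x + 1)) ∨
  (η x = η (x + 1) ∧ η (x + 1) = η (x + 2))

instance (η : Config) (x : ℤ) : Decidable (Unstable η x) := by
  unfold Unstable; infer_instance

/-- One step of the dynamics: stable sites keep their color, unstable ones are recolored
using the fresh colors `c`. -/
def update (η : Config) (c : ℤ → Bool) : Config :=
  fun x => if Unstable η x then c x else η x

/-- `evolve ω η k = R^k(η)`: the configuration after `k` steps, where the simultaneous
recoloring at step `j` uses the fresh colors `ω j`. -/
def evolve (ω : ℕ → ℤ → Bool) (η : Config) : ℕ → Config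
  | 0 => η
  | k + 1 => update (evolve ω η k) (ω k)

/-- `μ` makes the coordinates of the coin field i.i.d. uniform on the two colors:
every finite cylinder event has probability `(1/2)^(number of coordinates)`. -/
def IIDCoins (μ : Measure (ℕ → ℤ → Bool)) : Prop :=
  ∀ (S : Finset (ℕ × ℤ)) (f : ℕ × ℤ → Bool),
    μ {ω | ∀ p ∈ S, ω p.1 p.2 = f p} = (1 / 2 : ℝ≥0∞) ^ S.card

/-- The number of unstable sites of a configuration. -/
noncomputable def numUnstable (η : Config) : ℕ∞ := {x : ℤ | Unstable η x}.encard

/-- `p_k^I`: sup over configurations `η` with site `0` unstable of `P(σ_{R^k(η)}(0) = 0)`. -/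
noncomputable def pI (μ : Measure (ℕ → ℤ → Bool)) (k : ℕ) : ℝ≥0∞ :=
  ⨆ (η : Config) (_ : Unstable η 0), μ {ω | Unstable (evolve ω η k) 0}

/-- `p_k^{III}`: sup over configurations `η` with sites `-1, 0, 1` all unstable of
`P(σ_{R^k(η)}(0) = 0)`. -/
noncomputable def pIII (μ : Measure (ℕ → ℤ → Bool)) (k : ℕ) : ℝ≥0∞ :=
  ⨆ (η : Config) (_ : Unstable η (-1) ∧ Unstable η 0 ∧ Unstable η 1),
    μ {ω | Unstable (evolve ω η k) 0}

/-- The conditioning event of `p_k^S(n,m)` (at site `0`): all sites `i` with `-n ≤ i ≤ m`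
are stable, and the boundary sites `-n-1` (if `n` is finite) and `m+1` (if `m` is finite)
are unstable.  The inequality `-n ≤ i ≤ m` in `ℕ∞` is coded using `Int.toNat`. -/
def SWindow (η : Config) (n m : ℕ∞) : Prop :=
  (∀ i : ℤ, (((-i).toNat : ℕ∞) ≤ n) → ((i.toNat : ℕ∞) ≤ m) → ¬ Unstable η i) ∧
  (∀ nn : ℕ, n = (nn : ℕ∞) → Unstable η (-(nn : ℤ) - 1)) ∧
  (∀ mm : ℕ, m = (mm : ℕ∞) → Unstable η ((mm : ℤ) + 1))

/-- `p_k^S(n,m)` for `n, m ∈ ℕ ∪ {∞}`: sup over configurations `η` satisfying the stable-window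
condition of `P(σ_{R^k(η)}(0) = 0)`. -/
noncomputable def pS (μ : Measure (ℕ → ℤ → Bool)) (k : ℕ) (n m : ℕ∞) : ℝ≥0∞ :=
  ⨆ (η : Config) (_ : SWindow η n m), μ {ω | Unstable (evolve ω η k) 0}

/-!
A stable site keeps its colour and stability of a site depends only on the five sites around it,
so information travels at most two sites per step: `σ_{R^k η}(0)` is determined by `η` on
`(-∞, 2k]` once the sites `2k - 1, 2k` are stable, and symmetrically (reflect `ℤ`) on the left.
Hence `p_k^S(n, m) = 0` for `n, m ≥ 2k`, and `p_k^S(n, m)` does not depend on `m ≥ 2k`: keeping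
`η` up to `2k` and continuing it by alternating colours up to `m' + 1`, then a constant tail,
moves the right end of the stable window from `m` to `m'` without changing the event at `0`.
The same holds for `n ≥ 2k`, so for `g ≥ 4k` the sum equals
`∑_{i < 2k} (p_k^S(i, 2k) + p_k^S(2k, i))`.
-/

open Set

lemma unstable_congr {η η' : Config} {x : ℤ} (h : EqOn η η' (Icc (x - 2) (x + 2))) :
    Unstable η x ↔ Unstable η' x := by
  simp only [Unstable, h (x := x - 2) ⟨le_rfl, by omega⟩, h (x := x - 1) ⟨by omega, by omega⟩,
    h (x := x) ⟨by omega, by omega⟩, h (x := x + 1) ⟨by omega, by omega⟩,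
    h (x := x + 2) ⟨by omega, le_rfl⟩]

lemma unstable_iff_exists {η : Config} {x : ℤ} :
    Unstable η x ↔ ∃ y, x - 2 ≤ y ∧ y ≤ x ∧ η y = η (y + 1) ∧ η (y + 1) = η (y + 2) := by
  constructor
  · rintro (⟨h₁, h₂⟩ | ⟨h₁, h₂⟩ | ⟨h₁, h₂⟩)
    · exact ⟨x - 2, by omega, by omega, by ring_nf at h₁ h₂ ⊢; exact ⟨h₁, h₂⟩⟩
    · exact ⟨x - 1, by omega, by omega, by ring_nf at h₁ h₂ ⊢; exact ⟨h₁, h₂⟩⟩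
    · exact ⟨x, by omega, by omega, h₁, h₂⟩
  · rintro ⟨y, hy₁, hy₂, h₁, h₂⟩
    obtain rfl | rfl | rfl : x = y + 2 ∨ x = y + 1 ∨ x = y := by omega
    · left; ring_nf at h₁ h₂ ⊢; exact ⟨h₁, h₂⟩
    · right; left; ring_nf at h₁ h₂ ⊢; exact ⟨h₁, h₂⟩
    · right; right; exact ⟨h₁, h₂⟩

lemma update_of_not_unstable {η : Config} {x : ℤ} (c : ℤ → Bool) (h : ¬ Unstable η x) :
    update η c x = η x :=
  if_neg h

lemma update_congr {η η' : Config} {x : ℤ} (c : ℤ → Bool) (h : EqOn η η' (Icc (x - 2) (x + 2))) :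
    update η c x = update η' c x := by
  simp only [update, unstable_congr h, h (x := x) ⟨by omega, by omega⟩]

lemma not_unstable_evolve {η : Config} {a b : ℤ} (ω : ℕ → ℤ → Bool)
    (h : ∀ x ∈ Icc a b, ¬ Unstable η x) (j : ℕ) :
    ∀ x ∈ Icc (a + 2 * j) (b - 2 * j), ¬ Unstable (evolve ω η j) x := by
  induction j with
  | zero => simpa [evolve] using h
  | succ j ih =>
    rintro x ⟨hx₁, hx₂⟩
    push_cast at hx₁ hx₂
    have hkeep : EqOn (evolve ω η (j + 1)) (evolve ω η j) (Icc (x - 2) (x + 2)) :=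
      fun y hy => update_of_not_unstable _ (ih y ⟨by grind, by grind⟩)
    rw [unstable_congr hkeep]
    exact ih x ⟨by omega, by omega⟩

/-- The stable pair `N - 1, N` keeps its colours, so the first step loses no range. -/
lemma evolve_eqOn_Iic {η η' : Config} {N : ℤ} (ω : ℕ → ℤ → Bool) (h : EqOn η η' (Iic N))
    (hη : ∀ x ∈ Icc (N - 1) N, ¬ Unstable η x) (hη' : ∀ x ∈ Icc (N - 1) N, ¬ Unstable η' x)
    (j : ℕ) : EqOn (evolve ω η (j + 1)) (evolve ω η' (j + 1)) (Iic (N - 2 * j)) := by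
  induction j with
  | zero =>
    intro x hx
    simp only [mem_Iic, CharP.cast_eq_zero, mul_zero, sub_zero] at hx
    change update η (ω 0) x = update η' (ω 0) x
    by_cases hxN : x ≤ N - 2
    · exact update_congr _ (h.mono fun y hy => by simp only [mem_Icc, mem_Iic] at hy ⊢; omega)
    · have hx' : x ∈ Icc (N - 1) N := ⟨by omega, hx⟩
      rw [update_of_not_unstable _ (hη x hx'), update_of_not_unstable _ (hη' x hx')]
      exact h hx
  | succ j ih =>
    intro x hx
    simp only [mem_Iic] at hx
    push_cast at hx
    exact update_congr _ (ih.mono fun y hy => by simp only [mem_Icc, mem_Iic] at hy ⊢; omega)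

lemma unstable_evolve_iff_of_eqOn_Iic {η η' : Config} {N : ℤ} {k : ℕ} (ω : ℕ → ℤ → Bool)
    (hk : 1 ≤ k) (hN : 2 * k ≤ N) (h : EqOn η η' (Iic N))
    (hη : ∀ x ∈ Icc (N - 1) N, ¬ Unstable η x) (hη' : ∀ x ∈ Icc (N - 1) N, ¬ Unstable η' x) :
    Unstable (evolve ω η k) 0 ↔ Unstable (evolve ω η' k) 0 := by
  obtain ⟨j, rfl⟩ := Nat.exists_eq_add_of_le' hk
  exact unstable_congr ((evolve_eqOn_Iic ω h hη hη' j).mono fun y hy => by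
    simp only [mem_Icc, mem_Iic] at hy ⊢; push_cast at hN; omega)

def reflect (η : Config) : Config := fun x => η (-x)

@[simp] lemma reflect_apply (η : Config) (x : ℤ) : reflect η x = η (-x) := rfl

lemma unstable_reflect {η : Config} {x : ℤ} : Unstable (reflect η) x ↔ Unstable η (-x) := by
  simp only [Unstable, reflect_apply, show -(x - 2) = -x + 2 by ring,
    show -(x - 1) = -x + 1 by ring, show -(x + 1) = -x - 1 by ring, show -(x + 2) = -x - 2 by ring]
  grind

lemma reflect_reflect (η : Config) : reflect (reflect η) = η := funext fun x => by simp

lemma update_reflect (η c : Config) : update (reflect η) (reflect c) = reflect (update η c) :=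
  funext fun x => by simp [update, unstable_reflect]

lemma evolve_reflect (ω : ℕ → ℤ → Bool) (η : Config) (k : ℕ) :
    evolve ω (reflect η) k = reflect (evolve (fun j => reflect (ω j)) η k) := by
  induction k with
  | zero => rfl
  | succ k ih => rw [evolve, ih, evolve, ← update_reflect, reflect_reflect]

lemma swindow_reflect {η : Config} {n m : ℕ∞} (h : SWindow η n m) : SWindow (reflect η) m n := by
  refine ⟨fun i him hin => ?_, fun mm hmm => ?_, fun nn hnn => ?_⟩
  · rw [unstable_reflect]
    exact h.1 (-i) (by rwa [neg_neg]) him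
  · rw [unstable_reflect, show -(-(mm : ℤ) - 1) = mm + 1 by ring]
    exact h.2.2 mm hmm
  · rw [unstable_reflect, show -((nn : ℤ) + 1) = -nn - 1 by ring]
    exact h.2.1 nn hnn

lemma SWindow.not_unstable {η : Config} {n : ℕ∞} {m : ℕ} (h : SWindow η n m) {i : ℤ}
    (hi₀ : 0 ≤ i) (him : i ≤ m) : ¬ Unstable η i :=
  h.1 i (by simp [show (-i).toNat = 0 by omega]) (by exact_mod_cast (show i.toNat ≤ m by omega))

/-- `η` up to `N`, then alternating colours up to `M + 1`, then constant. -/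
def alternateFrom (η : Config) (N M : ℤ) : Config :=
  fun y => if y ≤ N then η y else xor (η N) (min y (M + 1) - N).bodd

lemma alternateFrom_of_le {η : Config} {N M y : ℤ} (hy : y ≤ N) : alternateFrom η N M y = η y :=
  if_pos hy

lemma alternateFrom_of_mem_Icc {η : Config} {N M y : ℤ} (hy : y ∈ Icc N (M + 1)) :
    alternateFrom η N M y = xor (η N) (y - N).bodd := by
  rcases hy.1.eq_or_lt with rfl | hNy
  · simp [alternateFrom]
  · simp [alternateFrom, not_le.2 hNy, min_eq_left hy.2]

lemma alternateFrom_ne_succ {η : Config} {N M y : ℤ} (hNy : N ≤ y) (hyM : y ≤ M) :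
    alternateFrom η N M y ≠ alternateFrom η N M (y + 1) := by
  rw [alternateFrom_of_mem_Icc ⟨hNy, by omega⟩, alternateFrom_of_mem_Icc ⟨by omega, by omega⟩,
    show y + 1 - N = (y - N) + 1 by ring, Int.bodd_add]
  simp

lemma alternateFrom_of_lt {η : Config} {N M y : ℤ} (hNM : N ≤ M) (hy : M < y) :
    alternateFrom η N M y = alternateFrom η N M (M + 1) := by
  simp [alternateFrom, show ¬ y ≤ N by omega, show ¬ M + 1 ≤ N by omega,
    min_eq_right (show M + 1 ≤ y by omega)]

lemma swindow_alternateFrom {η : Config} {n : ℕ∞} {N m m' : ℕ} (h : SWindow η n m)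
    (hN : 1 ≤ N) (hNm : N ≤ m) (hNm' : N ≤ m') : SWindow (alternateFrom η N m') n m' := by
  have hagree : EqOn (alternateFrom η N m') η (Iic N) := fun y hy => alternateFrom_of_le hy
  refine ⟨fun i hin him hu => ?_, fun nn hnn => ?_, fun mm hmm => ?_⟩
  · have him' : i.toNat ≤ m' := by exact_mod_cast him
    obtain ⟨y, hy₁, hy₂, e₁, e₂⟩ := unstable_iff_exists.1 hu
    by_cases hyN : y + 2 ≤ N
    · refine h.1 i hin (by exact_mod_cast (show i.toNat ≤ m by omega)) ?_
      refine unstable_iff_exists.2 ⟨y, hy₁, hy₂, ?_, ?_⟩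
      · rwa [← hagree (mem_Iic.2 (by omega : y ≤ N)), ← hagree (mem_Iic.2 (by omega : y + 1 ≤ N))]
      · rwa [← hagree (mem_Iic.2 (by omega : y + 1 ≤ N)),
          ← hagree (mem_Iic.2 (by omega : y + 2 ≤ N))]
    · rcases le_or_gt (y + 1) m' with hy | hy
      · rw [show y + 2 = y + 1 + 1 by ring] at e₂
        exact alternateFrom_ne_succ (by omega) hy e₂
      · exact alternateFrom_ne_succ (by omega) (by omega) e₁
  · rw [unstable_congr (hagree.mono fun y hy => by simp only [mem_Icc, mem_Iic] at hy ⊢; omega)]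
    exact h.2.1 nn hnn
  · obtain rfl : mm = m' := by exact_mod_cast hmm.symm
    refine Or.inr (Or.inr ⟨?_, ?_⟩)
    · exact (alternateFrom_of_lt (by omega) (by omega)).symm
    · exact (alternateFrom_of_lt (by omega) (by omega)).trans
        (alternateFrom_of_lt (by omega) (by omega)).symm

lemma SWindow.exists_right {η : Config} {n : ℕ∞} {k m : ℕ} (h : SWindow η n m) (m' : ℕ)
    (hk : 1 ≤ k) (hm : 2 * k ≤ m) (hm' : 2 * k ≤ m') :
    ∃ η', SWindow η' n m' ∧ ∀ ω, Unstable (evolve ω η k) 0 ↔ Unstable (evolve ω η' k) 0 := by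
  have h' := swindow_alternateFrom h (by omega) hm hm'
  refine ⟨alternateFrom η (2 * k : ℕ) m', h', fun ω => ?_⟩
  refine unstable_evolve_iff_of_eqOn_Iic ω hk (by push_cast; rfl)
    (fun y hy => (alternateFrom_of_le hy).symm) (fun x ⟨hx₁, hx₂⟩ => ?_) (fun x ⟨hx₁, hx₂⟩ => ?_)
    <;> push_cast at hx₁ hx₂
  · exact h.not_unstable (by omega) (by omega)
  · exact h'.not_unstable (by omega) (by omega)

lemma SWindow.exists_left {η : Config} {m : ℕ∞} {k n : ℕ} (h : SWindow η n m) (n' : ℕ)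
    (hk : 1 ≤ k) (hn : 2 * k ≤ n) (hn' : 2 * k ≤ n') :
    ∃ η', SWindow η' n' m ∧ ∀ ω, Unstable (evolve ω η k) 0 ↔ Unstable (evolve ω η' k) 0 := by
  obtain ⟨η', h', hiff⟩ := (swindow_reflect h).exists_right n' hk hn hn'
  refine ⟨reflect η', swindow_reflect h', fun ω => ?_⟩
  conv_lhs => rw [← reflect_reflect η]
  rw [evolve_reflect ω (reflect η), evolve_reflect ω η', unstable_reflect, unstable_reflect,
    neg_zero]
  exact hiff _

lemma pS_le_pS_of_forall_exists {μ : Measure (ℕ → ℤ → Bool)} {k : ℕ} {n m n' m' : ℕ∞}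
    (h : ∀ η, SWindow η n m →
      ∃ η', SWindow η' n' m' ∧ ∀ ω, Unstable (evolve ω η k) 0 ↔ Unstable (evolve ω η' k) 0) :
    pS μ k n m ≤ pS μ k n' m' := by
  refine iSup₂_le fun η hη => ?_
  obtain ⟨η', hη', hiff⟩ := h η hη
  simp only [hiff]
  exact le_iSup₂_of_le η' hη' le_rfl

lemma pS_eq_of_two_mul_le_right (μ : Measure (ℕ → ℤ → Bool)) {k : ℕ} (hk : 1 ≤ k) (n : ℕ∞)
    {m m' : ℕ} (hm : 2 * k ≤ m) (hm' : 2 * k ≤ m') : pS μ k n m = pS μ k n m' :=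
  le_antisymm (pS_le_pS_of_forall_exists fun _ h => h.exists_right m' hk hm hm')
    (pS_le_pS_of_forall_exists fun _ h => h.exists_right m hk hm' hm)

lemma pS_eq_of_two_mul_le_left (μ : Measure (ℕ → ℤ → Bool)) {k : ℕ} (hk : 1 ≤ k) {n n' : ℕ}
    (m : ℕ∞) (hn : 2 * k ≤ n) (hn' : 2 * k ≤ n') : pS μ k n m = pS μ k n' m :=
  le_antisymm (pS_le_pS_of_forall_exists fun _ h => h.exists_left n' hk hn hn')
    (pS_le_pS_of_forall_exists fun _ h => h.exists_left n hk hn' hn)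

lemma pS_eq_zero_of_two_mul_le (μ : Measure (ℕ → ℤ → Bool)) {k : ℕ} {n m : ℕ∞}
    (hn : 2 * k ≤ n) (hm : 2 * k ≤ m) : pS μ k n m = 0 := by
  refine nonpos_iff_eq_zero.1 (iSup₂_le fun η hη => ?_)
  have hstable : ∀ x ∈ Icc (-(2 * k : ℤ)) (2 * k), ¬ Unstable η x := fun x ⟨hx₁, hx₂⟩ =>
    hη.1 x (le_trans (by exact_mod_cast (show (-x).toNat ≤ 2 * k by omega)) hn)
      (le_trans (by exact_mod_cast (show x.toNat ≤ 2 * k by omega)) hm)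
  have hempty : {ω | Unstable (evolve ω η k) 0} = ∅ :=
    eq_empty_of_forall_notMem fun ω => not_unstable_evolve ω hstable k 0 (by simp)
  simp [hempty]

lemma sum_pS_eq (μ : Measure (ℕ → ℤ → Bool)) {k g : ℕ} (hk : 1 ≤ k) (hg : 4 * k ≤ g) :
    ∑ i ∈ Finset.Icc 1 g, pS μ k ((i - 1 : ℕ) : ℕ∞) ((g - i : ℕ) : ℕ∞) =
      ∑ i ∈ Finset.range (2 * k),
        (pS μ k (i : ℕ∞) ((2 * k : ℕ) : ℕ∞) + pS μ k ((2 * k : ℕ) : ℕ∞) (i : ℕ∞)) := by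
  obtain ⟨d, rfl⟩ := Nat.exists_eq_add_of_le hg
  rw [← Finset.Ico_add_one_right_eq_Icc, Finset.sum_Ico_eq_sum_range,
    show 4 * k + d + 1 - 1 = 2 * k + (d + 2 * k) by omega, Finset.sum_range_add,
    Finset.sum_range_add]
  have hmiddle : ∑ i ∈ Finset.range d,
      pS μ k ((1 + (2 * k + i) - 1 : ℕ) : ℕ∞) ((4 * k + d - (1 + (2 * k + i)) : ℕ) : ℕ∞) = 0 :=
    Finset.sum_eq_zero fun i hi => by
      rw [Finset.mem_range] at hi
      exact pS_eq_zero_of_two_mul_le μ (by norm_cast; omega) (by norm_cast; omega)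
  rw [hmiddle, zero_add, Finset.sum_add_distrib,
    ← Finset.sum_range_reflect (fun i => pS μ k ((2 * k : ℕ) : ℕ∞) (i : ℕ∞))]
  congr 1 <;> refine Finset.sum_congr rfl fun i hi => ?_ <;> rw [Finset.mem_range] at hi
  · rw [show 1 + i - 1 = i by omega]
    exact pS_eq_of_two_mul_le_right μ hk _ (by omega) le_rfl
  · rw [show 4 * k + d - (1 + (2 * k + (d + i))) = 2 * k - 1 - i by omega]
    exact pS_eq_of_two_mul_le_left μ hk _ (by omega) le_rfl

theorem pS_sum_stabilizes_general (μ : Measure (ℕ → ℤ → Bool))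
    (k : ℕ) (hk : 1 ≤ k) (g : ℕ) (hg : 4 * k < g) :
    ∑ i ∈ Finset.Icc 1 g, pS μ k ((i - 1 : ℕ) : ℕ∞) ((g - i : ℕ) : ℕ∞) =
      ∑ i ∈ Finset.Icc 1 (4 * k), pS μ k ((i - 1 : ℕ) : ℕ∞) ((4 * k - i : ℕ) : ℕ∞) := by
  rw [sum_pS_eq μ hk hg.le, sum_pS_eq μ hk le_rfl]

/-- for `g > 4k`, `Σ_{i=1}^{g} p_k^S(i-1, g-i) = Σ_{i=1}^{4k} p_k^S(i-1, 4k-i)`. -/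
theorem pS_sum_stabilizes (μ : Measure (ℕ → ℤ → Bool)) [IsProbabilityMeasure μ]
    (hμ : IIDCoins μ) (k : ℕ) (hk : 1 ≤ k) (g : ℕ) (hg : 4 * k < g) :
    ∑ i ∈ Finset.Icc 1 g, pS μ k ((i - 1 : ℕ) : ℕ∞) ((g - i : ℕ) : ℕ∞) =
      ∑ i ∈ Finset.Icc 1 (4 * k), pS μ k ((i - 1 : ℕ) : ℕ∞) ((4 * k - i : ℕ) : ℕ∞) :=
  pS_sum_stabilizes_general μ k hk g hg
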